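/- Every finite subgroup of a Coxeter group W is contained in a conjugate of a parabolic subgroup W_T of finite order, for some subset T of the Coxeter generating set S. -/

import Mathlib

/-!
Tits's argument through the geometric representation `ρ` of `W` on `B →₀ ℝ`, where
`s i` acts as the reflection in `α i` for the form `⟪α i, α j⟫ = -cos (π / m i j)`.
A rank-two computation with Chebyshev polynomials shows that every root `ρ w (α i)` is either
nonnegative or nonpositive, so that `w` is determined by its (finite) inversion set.

For a finite subgroup `H`, the functional `z = ∑ h ∈ H, (sum of coordinates) ∘ ρ h` is
`H`-invariant and negative on only finitely many positive roots; replacing `z` by `z ∘ ρ u` for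
a suitable `u` makes it nonnegative on every simple root. The stabiliser of such a dominant
functional `f` is the parabolic subgroup `W_T`, `T = {i | f (α i) = 0}`, and `W_T` is finite
because all its inversion sets lie among the finitely many positive roots killed by `f`.
Since `u⁻¹ H u` fixes `f`, it lies in `W_T`.
-/

open Real Polynomial.Chebyshev

local notation "α" i:max => Finsupp.single i (1 : ℝ)

namespace Polynomial.Chebyshev

lemma U_real_cos_pi_div_nonneg {m : ℕ} {n : ℤ} (hm : m ≠ 1) (hn : -1 ≤ n)
    (hnm : m = 0 ∨ n + 1 ≤ m) : 0 ≤ (U ℝ n).eval (cos (π / m)) := by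
  obtain rfl | hn := hn.eq_or_lt
  · simp
  rcases hnm with rfl | hnm
  · simp only [Nat.cast_zero, div_zero, cos_zero, U_eval_one]
    exact_mod_cast (by omega : 0 ≤ n + 1)
  have hm2 : (2 : ℝ) ≤ m := by exact_mod_cast (by omega : 2 ≤ m)
  have hsin : 0 < sin (π / m) :=
    sin_pos_of_pos_of_lt_pi (by positivity) (div_lt_self pi_pos (by linarith))
  have hnm' : ((n : ℝ) + 1) ≤ m := by exact_mod_cast hnm
  have hn' : (0 : ℝ) ≤ n + 1 := by exact_mod_cast (by omega : (0 : ℤ) ≤ n + 1)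
  have hangle : 0 ≤ sin ((n + 1) * (π / m)) := by
    apply sin_nonneg_of_nonneg_of_le_pi (by positivity)
    rw [← mul_div_assoc, div_le_iff₀ (by linarith)]
    nlinarith [pi_pos]
  rw [← U_real_cos] at hangle
  exact (mul_nonneg_iff_of_pos_right hsin).mp hangle

lemma U_real_cos_pi_div_two_mul {m : ℕ} (hm : 2 ≤ m) :
    (U ℝ (2 * m)).eval (cos (π / m)) = 1 ∧ (U ℝ (2 * m - 1)).eval (cos (π / m)) = 0 := by
  have hm' : (2 : ℝ) ≤ m := by exact_mod_cast hm
  have hsin : sin (π / m) ≠ 0 :=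
    (sin_pos_of_pos_of_lt_pi (by positivity) (div_lt_self pi_pos (by linarith))).ne'
  have h2π : 2 * (m : ℝ) * (π / m) = 2 * π := by field_simp
  constructor
  · apply mul_right_cancel₀ hsin
    rw [U_real_cos, one_mul]
    push_cast
    rw [add_mul, h2π, one_mul, add_comm, sin_add_two_pi]
  · apply mul_right_cancel₀ hsin
    rw [U_real_cos, zero_mul]
    push_cast
    rw [sub_add_cancel, h2π, sin_two_pi]

end Polynomial.Chebyshev

noncomputable section

namespace Finsupp

variable {B : Type*}

lemma monotone_of_apply_single_one_nonneg {f : Module.Dual ℝ (B →₀ ℝ)}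
    (hf : ∀ i, 0 ≤ f (α i)) : Monotone f := by
  have hnonneg : ∀ v : B →₀ ℝ, 0 ≤ v → 0 ≤ f v := fun v hv => by
    rw [← sum_single v, map_finsuppSum]
    refine Finset.sum_nonneg fun b _ => ?_
    dsimp only
    rw [← smul_single_one, map_smul, smul_eq_mul]
    exact mul_nonneg (le_def.mp hv b) (hf b)
  intro x y hxy
  simpa using hnonneg (y - x) (sub_nonneg.mpr hxy)

lemma single_one_pos (i : B) : 0 < α i :=
  (single_nonneg.mpr zero_le_one).lt_of_ne' (single_ne_zero.mpr one_ne_zero)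

def coordSum : Module.Dual ℝ (B →₀ ℝ) := linearCombination ℝ fun _ => 1

lemma coordSum_pos {v : B →₀ ℝ} (hv : 0 < v) : 0 < coordSum v := by
  rw [coordSum, linearCombination_apply]
  obtain ⟨b, hb⟩ := support_nonempty_iff.mpr hv.ne'
  refine Finset.sum_pos' (fun b _ => ?_) ⟨b, hb, ?_⟩
  · simpa using le_def.mp hv.le b
  · simpa using (le_def.mp hv.le b).lt_of_ne' (mem_support_iff.mp hb)

end Finsupp

namespace CoxeterMatrix

variable {B : Type*} (M : CoxeterMatrix B)

/-- For `M i j = 0` (that is, `m i j = ∞`) the junk value `π / 0 = 0` yields the intended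
entry `-1`. -/
def cosForm : LinearMap.BilinForm ℝ (B →₀ ℝ) :=
  Finsupp.lift _ ℝ B fun i => Finsupp.lift ℝ ℝ B fun j => -cos (π / M i j)

def simpleReflection (i : B) : (B →₀ ℝ) ≃ₗ[ℝ] (B →₀ ℝ) :=
  Module.reflection (x := α i) (f := 2 • M.cosForm (α i))
    (by simp [cosForm])

local notation "σ" => M.simpleReflection

variable {M}

lemma cosForm_single (i j : B) (a b : ℝ) :
    M.cosForm (Finsupp.single i a) (Finsupp.single j b) = a * b * -cos (π / M i j) := by
  simp [cosForm, mul_assoc]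

lemma cosForm_simpleRoot (i j : B) : M.cosForm (α i) (α j) = -cos (π / M i j) := by
  simp [cosForm_single]

lemma cosForm_simpleRoot_self (i : B) : M.cosForm (α i) (α i) = 1 := by
  simp [cosForm_simpleRoot]

lemma cosForm_isSymm : M.cosForm.IsSymm := by
  refine ⟨fun u v => ?_⟩
  induction u using Finsupp.induction_linear with
  | zero => simp
  | add u₁ u₂ h₁ h₂ => simp [h₁, h₂]
  | single i a =>
    induction v using Finsupp.induction_linear with
    | zero => simp
    | add v₁ v₂ h₁ h₂ => simp [h₁, h₂]
    | single j b => simp [cosForm_single, M.symmetric i j, mul_comm a b]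

lemma simpleReflection_apply (i : B) (v : B →₀ ℝ) :
    σ i v = v - (2 * M.cosForm (α i) v) • α i := by
  simp [simpleReflection, Module.reflection_apply]

lemma simpleReflection_apply_of_ne (t : B) (β : B →₀ ℝ) {b : B} (hb : b ≠ t) :
    σ t β b = β b := by
  simp [simpleReflection_apply, Finsupp.single_eq_of_ne hb]

lemma simpleReflection_simpleRoot (i : B) : σ i (α i) = -α i :=
  Module.reflection_apply_self _

lemma simpleReflection_inv (i : B) : (σ i)⁻¹ = σ i := rfl

lemma simpleReflection_mul_self (i : B) : σ i * σ i = 1 := by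
  ext v : 1
  rw [LinearEquiv.mul_apply, simpleReflection_apply (v := v), simpleReflection_apply]
  simp only [map_sub, map_smul, cosForm_simpleRoot_self, smul_eq_mul, LinearEquiv.coe_one, id_eq]
  module

lemma simpleReflection_simpleReflection (t : B) (β : B →₀ ℝ) : σ t (σ t β) = β := by
  rw [← LinearEquiv.mul_apply, simpleReflection_mul_self]
  rfl

lemma simpleReflection_ne_simpleRoot_of_pos {t : B} {β : B →₀ ℝ} (hpos : 0 < β) :
    σ t β ≠ α t := by
  intro h
  have hβ : β = -α t := by
    rw [← simpleReflection_simpleReflection t β, h, simpleReflection_simpleRoot]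
  rw [hβ, neg_pos] at hpos
  exact hpos.not_ge (Finsupp.single_one_pos t).le

lemma cosForm_simpleReflection (i : B) (u v : B →₀ ℝ) :
    M.cosForm (σ i u) (σ i v) = M.cosForm u v := by
  simp only [simpleReflection_apply, map_sub, map_smul, LinearMap.sub_apply,
    LinearMap.smul_apply, cosForm_simpleRoot_self, smul_eq_mul, cosForm_isSymm.eq u (α i)]
  ring

section Dihedral

variable {i j : B}

lemma simpleReflection_apply_pair_left (x y : ℝ) :
    σ i (x • α i + y • α j) = (2 * cos (π / M i j) * y - x) • α i + y • α j := by
  simp only [simpleReflection_apply, map_add, map_smul, cosForm_simpleRoot_self,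
    cosForm_simpleRoot]
  module

lemma simpleReflection_apply_pair_right (x y : ℝ) :
    σ j (x • α i + y • α j) = x • α i + (2 * cos (π / M i j) * x - y) • α j := by
  simp only [simpleReflection_apply, map_add, map_smul, cosForm_simpleRoot_self,
    cosForm_simpleRoot, M.symmetric j i]
  module

lemma simpleReflection_mul_pow_apply (n : ℕ) :
    ((σ i * σ j) ^ n) (α i) =
      (U ℝ (2 * n)).eval (cos (π / M i j)) • α i +
        (U ℝ (2 * n - 1)).eval (cos (π / M i j)) • α j := by
  induction n with
  | zero => simp
  | succ n ih =>
    rw [pow_succ', LinearEquiv.mul_apply, ih, LinearEquiv.mul_apply,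
      simpleReflection_apply_pair_right, simpleReflection_apply_pair_left]
    have h₁ := U_add_one ℝ (2 * n)
    have h₂ := U_add_one ℝ (2 * n + 1)
    simp only [add_sub_cancel_right] at h₂
    push_cast
    rw [show 2 * ((n : ℤ) + 1) = 2 * n + 1 + 1 by ring, add_sub_cancel_right, h₂, h₁]
    simp only [Polynomial.eval_sub, Polynomial.eval_mul, Polynomial.eval_ofNat, Polynomial.eval_X]

lemma simpleReflection_mul_pow_coxeter_apply_left (hij : i ≠ j) (hm : M i j ≠ 0) :
    ((σ i * σ j) ^ M i j) (α i) = α i := by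
  have h2 : 2 ≤ M i j := by have := M.off_diagonal i j hij; omega
  obtain ⟨h₀, h₁⟩ := U_real_cos_pi_div_two_mul h2
  rw [simpleReflection_mul_pow_apply, h₀, h₁, one_smul, zero_smul, add_zero]

lemma simpleReflection_mul_pow_coxeter_apply_right (hij : i ≠ j) (hm : M i j ≠ 0) :
    ((σ i * σ j) ^ M i j) (α j) = α j := by
  have hji := simpleReflection_mul_pow_coxeter_apply_left hij.symm (M.symmetric i j ▸ hm)
  rw [M.symmetric j i] at hji
  have hinv : σ j * σ i = (σ i * σ j)⁻¹ := by
    rw [mul_inv_rev, simpleReflection_inv, simpleReflection_inv]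
  conv_lhs => rw [← hji, ← LinearEquiv.mul_apply, hinv, inv_pow, mul_inv_cancel]
  rfl

/-- The Gram determinant `1 - cos (π / M i j) ^ 2` of `α i, α j` is nonzero. -/
lemma exists_eq_orthogonal_add_pair (hij : i ≠ j) (hm : M i j ≠ 0) (v : B →₀ ℝ) :
    ∃ (v₀ : B →₀ ℝ) (a b : ℝ), v = v₀ + a • α i + b • α j ∧
      M.cosForm (α i) v₀ = 0 ∧ M.cosForm (α j) v₀ = 0 := by
  have h2 : (2 : ℝ) ≤ M i j := by exact_mod_cast (by have := M.off_diagonal i j hij; omega)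
  set c := cos (π / M i j)
  have hc : 0 < 1 - c ^ 2 := by
    rw [← sin_sq]
    exact pow_pos (sin_pos_of_pos_of_lt_pi (by positivity) (div_lt_self pi_pos (by linarith))) 2
  set a' := M.cosForm (α i) v
  set b' := M.cosForm (α j) v
  refine ⟨v - ((a' + c * b') / (1 - c ^ 2)) • α i - ((b' + c * a') / (1 - c ^ 2)) • α j,
    (a' + c * b') / (1 - c ^ 2), (b' + c * a') / (1 - c ^ 2), by abel, ?_, ?_⟩ <;>
  · simp only [map_sub, map_smul, cosForm_simpleRoot_self, cosForm_simpleRoot, M.symmetric j i,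
      smul_eq_mul]
    field_simp
    ring

theorem isLiftable_simpleReflection : M.IsLiftable M.simpleReflection := by
  intro i j
  obtain rfl | hij := eq_or_ne i j
  · rw [M.diagonal, pow_one, simpleReflection_mul_self]
  obtain hm | hm := eq_or_ne (M i j) 0
  · rw [hm, pow_zero]
  ext v : 1
  obtain ⟨v₀, a, b, rfl, hi, hj⟩ := exists_eq_orthogonal_add_pair hij hm v
  have hfix : (σ i * σ j) v₀ = v₀ := by
    rw [LinearEquiv.mul_apply, simpleReflection_apply j, hj, simpleReflection_apply i]
    simp [hi]
  rw [map_add, map_add, map_smul, map_smul, simpleReflection_mul_pow_coxeter_apply_left hij hm,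
    simpleReflection_mul_pow_coxeter_apply_right hij hm, LinearEquiv.coe_pow,
    Function.iterate_fixed hfix]
  rfl

end Dihedral

end CoxeterMatrix

namespace CoxeterSystem

open List

variable {B W : Type*} [Group W] {M : CoxeterMatrix B} (cs : CoxeterSystem M W)

local prefix:100 "s" => cs.simple
local prefix:100 "ℓ" => cs.length
local notation "σ" => M.simpleReflection

def geometricRep : W →* (B →₀ ℝ) ≃ₗ[ℝ] (B →₀ ℝ) :=
  cs.lift ⟨M.simpleReflection, M.isLiftable_simpleReflection⟩

local notation "ρ" => cs.geometricRep

lemma geometricRep_simple (i : B) : ρ (s i) = σ i :=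
  cs.lift_apply_simple _ i

lemma geometricRep_mul_simple_apply (u : W) (t : B) (β : B →₀ ℝ) :
    ρ (u * s t) β = ρ u (σ t β) := by
  rw [map_mul, LinearEquiv.mul_apply, geometricRep_simple]

lemma cosForm_geometricRep (w : W) (u v : B →₀ ℝ) :
    M.cosForm (ρ w u) (ρ w v) = M.cosForm u v := by
  induction w using cs.simple_induction generalizing u v with
  | simple i => rw [geometricRep_simple, M.cosForm_simpleReflection]
  | one => rw [map_one]; rfl
  | mul w₁ w₂ h₁ h₂ => rw [map_mul, LinearEquiv.mul_apply, LinearEquiv.mul_apply, h₁, h₂]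

section Positivity

lemma exists_nonneg_geometricRep_alternatingWord {i j : B} (hij : i ≠ j) {n : ℕ}
    (hn : M i j = 0 ∨ n < M i j) :
    ∃ a b : ℝ, 0 ≤ a ∧ 0 ≤ b ∧
      ρ (cs.wordProd (alternatingWord i j n)) (α i) = a • α i + b • α j := by
  have hU : ∀ l : ℤ, -1 ≤ l → l ≤ n → 0 ≤ (U ℝ l).eval (cos (π / M i j)) := fun l hl hln =>
    U_real_cos_pi_div_nonneg (M.off_diagonal i j hij) hl (hn.imp_right fun h => by omega)
  rw [prod_alternatingWord_eq_mul_pow, map_mul, map_pow, map_mul]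
  obtain ⟨k, rfl | rfl⟩ := Nat.even_or_odd' n
  · refine ⟨(U ℝ (2 * k)).eval (cos (π / M i j)), (U ℝ (2 * k - 1)).eval (cos (π / M i j)),
      hU _ (by omega) (by push_cast; omega), hU _ (by omega) (by push_cast; omega), ?_⟩
    rw [if_pos (even_two_mul k), map_one, one_mul, Nat.mul_div_cancel_left k two_pos,
      geometricRep_simple, geometricRep_simple, M.simpleReflection_mul_pow_apply]
  · refine ⟨(U ℝ (2 * k)).eval (cos (π / M i j)), (U ℝ (2 * k + 1)).eval (cos (π / M i j)),
      hU _ (by omega) (by push_cast; omega), hU _ (by omega) (by push_cast; omega), ?_⟩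
    rw [if_neg (Nat.not_even_two_mul_add_one k), show (2 * k + 1) / 2 = k by omega,
      geometricRep_simple, geometricRep_simple, LinearEquiv.mul_apply,
      M.simpleReflection_mul_pow_apply, M.simpleReflection_apply_pair_right, U_add_one]
    simp only [Polynomial.eval_sub, Polynomial.eval_mul, Polynomial.eval_ofNat, Polynomial.eval_X]

theorem exists_pair_coset_factorization (i j : B) (w : W) :
    ∃ (v : W) (L : List B), w = v * cs.wordProd L ∧ ℓ w = ℓ v + L.length ∧
      (∀ x ∈ L, x = i ∨ x = j) ∧ ¬cs.IsRightDescent v i ∧ ¬cs.IsRightDescent v j := by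
  induction hn : ℓ w using Nat.strong_induction_on generalizing w with
  | _ n ih =>
  by_cases h : ∃ k, (k = i ∨ k = j) ∧ cs.IsRightDescent w k
  · obtain ⟨k, hk, hdesc⟩ := h
    have hlen := cs.isRightDescent_iff.mp hdesc
    obtain ⟨v, L, hw, hl, hL, hvi, hvj⟩ := ih _ (by omega) (w * s k) rfl
    refine ⟨v, L ++ [k], ?_, ?_, ?_, hvi, hvj⟩
    · rw [wordProd_append, wordProd_singleton, ← mul_assoc, ← hw, simple_mul_simple_cancel_right]
    · rw [length_append, length_singleton]
      omega
    · simpa [or_imp, forall_and] using ⟨hL, hk⟩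
  · push Not at h
    exact ⟨w, [], by simp, by simp [hn], by simp, h i (.inl rfl), h j (.inr rfl)⟩

lemma not_isReduced_append_pair (L : List B) (i : B) : ¬cs.IsReduced (L ++ [i] ++ [i]) := by
  intro h
  have := cs.length_wordProd_le L
  rw [IsReduced, wordProd_append, wordProd_append, wordProd_singleton,
    simple_mul_simple_cancel_right] at h
  simp at h
  omega

theorem eq_alternatingWord_of_isReduced_append {i j : B} {L : List B}
    (hL : ∀ x ∈ L, x = i ∨ x = j) (hred : cs.IsReduced (L ++ [i])) :
    L = alternatingWord i j L.length := by
  induction L using List.reverseRecOn generalizing i j with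
  | nil => rfl
  | append_singleton L x ih =>
    have hx : x = j := by
      refine (hL x (by simp)).resolve_left ?_
      rintro rfl
      exact cs.not_isReduced_append_pair L x hred
    subst hx
    have hredL : cs.IsReduced (L ++ [x]) := by
      simpa only [take_left] using hred.take (L ++ [x]).length
    rw [ih (fun y hy => (hL y (by simp [hy])).symm) hredL, length_append, length_singleton,
      alternatingWord_succ, length_alternatingWord, concat_eq_append]

/-- Factor `w = v * π L` with `L` a word in `i, j` and `v` without descents `i, j`. Then `L ++ [i]`
is reduced, so `L` alternates and is shorter than `M i j`, and the rank-two computation writes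
`ρ w (α i)` as a nonnegative combination of `ρ v (α i)` and `ρ v (α j)`. -/
theorem geometricRep_simpleRoot_nonneg {w : W} {i : B} (h : ¬cs.IsRightDescent w i) :
    0 ≤ ρ w (α i) := by
  induction hn : ℓ w using Nat.strong_induction_on generalizing w i with
  | _ n ih =>
  obtain rfl | hw := eq_or_ne w 1
  · simp [Finsupp.single_nonneg]
  obtain ⟨j, hj⟩ := cs.exists_rightDescent_of_ne_one hw
  have hij : i ≠ j := by rintro rfl; exact h hj
  obtain ⟨v, L, rfl, hlen, hL, hvi, hvj⟩ := cs.exists_pair_coset_factorization i j w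
  have hLne : L ≠ [] := by rintro rfl; simp only [wordProd_nil, mul_one] at hj; exact hvj hj
  have hv : ℓ v < n := by have := length_pos_iff.mpr hLne; omega
  have hred : cs.IsReduced (L ++ [i]) := by
    have h₁ := cs.not_isRightDescent_iff.mp h
    have h₂ := cs.length_mul_le v (cs.wordProd (L ++ [i]))
    have h₃ := cs.length_wordProd_le (L ++ [i])
    simp only [IsReduced, length_append, length_singleton, wordProd_append,
      wordProd_singleton, ← mul_assoc] at h₂ h₃ ⊢
    omega
  have hLalt := cs.eq_alternatingWord_of_isReduced_append hL hred
  have hbound : M i j = 0 ∨ L.length < M i j := by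
    by_contra! hcon
    refine cs.not_isReduced_alternatingWord j i (m := L.length + 1)
      (by rw [M.symmetric]; exact hcon.1) (by rw [M.symmetric]; omega) ?_
    rwa [alternatingWord_succ, ← hLalt, concat_eq_append]
  obtain ⟨a, b, ha, hb, hab⟩ := cs.exists_nonneg_geometricRep_alternatingWord hij hbound
  rw [map_mul, LinearEquiv.mul_apply, hLalt, hab, map_add, map_smul, map_smul]
  exact add_nonneg (smul_nonneg ha (ih _ hv hvi rfl)) (smul_nonneg hb (ih _ hv hvj rfl))

theorem geometricRep_simpleRoot_pos {w : W} {i : B} (h : ¬cs.IsRightDescent w i) :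
    0 < ρ w (α i) :=
  (cs.geometricRep_simpleRoot_nonneg h).lt_of_ne'
    ((ρ w).map_ne_zero_iff.mpr (Finsupp.single_one_pos i).ne')

theorem geometricRep_simpleRoot_neg {w : W} {i : B} (h : cs.IsRightDescent w i) :
    ρ w (α i) < 0 := by
  have := cs.geometricRep_simpleRoot_pos (cs.isRightDescent_iff_not_isRightDescent_mul.mp h)
  rwa [geometricRep_mul_simple_apply, M.simpleReflection_simpleRoot, map_neg, neg_pos] at this

end Positivity

section Roots

def roots : Set (B →₀ ℝ) := {β | ∃ w i, ρ w (α i) = β}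

def inversionSet (w : W) : Set (B →₀ ℝ) := {β | β ∈ cs.roots ∧ 0 < β ∧ ρ w β < 0}

lemma simpleRoot_mem_roots (i : B) : α i ∈ cs.roots := ⟨1, i, by rw [map_one]; rfl⟩

lemma geometricRep_mem_roots (w : W) {β : B →₀ ℝ} (hβ : β ∈ cs.roots) : ρ w β ∈ cs.roots := by
  obtain ⟨v, i, rfl⟩ := hβ
  exact ⟨w * v, i, by rw [map_mul, LinearEquiv.mul_apply]⟩

lemma simpleReflection_mem_roots (t : B) {β : B →₀ ℝ} (hβ : β ∈ cs.roots) :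
    σ t β ∈ cs.roots := by
  simpa only [geometricRep_simple] using cs.geometricRep_mem_roots (s t) hβ

lemma pos_or_neg_of_mem_roots {β : B →₀ ℝ} (hβ : β ∈ cs.roots) : 0 < β ∨ β < 0 := by
  obtain ⟨w, i, rfl⟩ := hβ
  by_cases h : cs.IsRightDescent w i
  · exact .inr (cs.geometricRep_simpleRoot_neg h)
  · exact .inl (cs.geometricRep_simpleRoot_pos h)

lemma cosForm_self_of_mem_roots {β : B →₀ ℝ} (hβ : β ∈ cs.roots) : M.cosForm β β = 1 := by
  obtain ⟨w, i, rfl⟩ := hβ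
  rw [cosForm_geometricRep, M.cosForm_simpleRoot_self]

/-- If `σ t β` were negative, `β` would be supported on `t`, hence equal to `α t` because roots
have norm one. -/
theorem simpleReflection_pos_of_pos {t : B} {β : B →₀ ℝ} (hβ : β ∈ cs.roots) (hpos : 0 < β)
    (hne : β ≠ α t) : 0 < σ t β := by
  refine (cs.pos_or_neg_of_mem_roots (cs.simpleReflection_mem_roots t hβ)).resolve_right
    fun hneg => ?_
  have hsupp : β = Finsupp.single t (β t) := by
    ext b
    obtain rfl | hb := eq_or_ne b t
    · simp
    rw [Finsupp.single_eq_of_ne hb]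
    have h₁ := Finsupp.le_def.mp hneg.le b
    rw [M.simpleReflection_apply_of_ne t β hb] at h₁
    exact le_antisymm h₁ (Finsupp.le_def.mp hpos.le b)
  have hnorm := cs.cosForm_self_of_mem_roots hβ
  rw [hsupp, M.cosForm_single, M.diagonal] at hnorm
  have hβt : 0 < β t := by
    refine (Finsupp.le_def.mp hpos.le t).lt_of_ne' fun h => hpos.ne' ?_
    rw [hsupp, h]
    simp
  have : β t = 1 := by norm_num at hnorm; nlinarith
  exact hne (by rw [hsupp, this])

theorem inversionSet_mul_simple {v : W} {t : B} (h : cs.IsRightDescent v t) :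
    cs.inversionSet (v * s t) = σ t '' (cs.inversionSet v \ {α t}) := by
  ext β
  constructor
  · rintro ⟨hβ, hpos, hneg⟩
    have hne : β ≠ α t := by
      rintro rfl
      exact (cs.geometricRep_simpleRoot_pos
        (cs.isRightDescent_iff_not_isRightDescent_mul.mp h)).not_gt hneg
    refine ⟨σ t β, ⟨⟨cs.simpleReflection_mem_roots t hβ, cs.simpleReflection_pos_of_pos hβ hpos hne,
      by rwa [← geometricRep_mul_simple_apply]⟩, M.simpleReflection_ne_simpleRoot_of_pos hpos⟩,
      M.simpleReflection_simpleReflection t β⟩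
  · rintro ⟨γ, ⟨⟨hγ, hpos, hneg⟩, hne⟩, rfl⟩
    exact ⟨cs.simpleReflection_mem_roots t hγ, cs.simpleReflection_pos_of_pos hγ hpos hne,
      by rwa [geometricRep_mul_simple_apply, M.simpleReflection_simpleReflection]⟩

lemma inversionSet_one : cs.inversionSet 1 = ∅ := by
  ext β
  simp only [inversionSet, map_one, LinearEquiv.coe_one, id_eq, Set.mem_ofPred_eq,
    Set.mem_empty_iff_false, iff_false, not_and]
  exact fun _ hpos hneg => hpos.not_gt hneg

lemma simpleRoot_mem_inversionSet_iff {v : W} {i : B} :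
    α i ∈ cs.inversionSet v ↔ cs.IsRightDescent v i := by
  refine ⟨fun ⟨_, _, hneg⟩ => ?_, fun h => ⟨cs.simpleRoot_mem_roots i,
    Finsupp.single_one_pos i, cs.geometricRep_simpleRoot_neg h⟩⟩
  by_contra h
  exact (cs.geometricRep_simpleRoot_pos h).not_gt hneg

theorem inversionSet_finite (v : W) : (cs.inversionSet v).Finite := by
  induction hn : ℓ v using Nat.strong_induction_on generalizing v with
  | _ n ih =>
  obtain rfl | hv := eq_or_ne v 1
  · simp [inversionSet_one]
  obtain ⟨t, ht⟩ := cs.exists_rightDescent_of_ne_one hv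
  have hsub : cs.inversionSet v ⊆ insert (α t) (σ t '' cs.inversionSet (v * s t)) := by
    intro β hβ
    rw [cs.inversionSet_mul_simple ht]
    by_cases hβt : β = α t
    · exact .inl hβt
    · exact .inr ⟨σ t β, ⟨β, ⟨hβ, hβt⟩, rfl⟩, M.simpleReflection_simpleReflection t β⟩
  have hlen := cs.isRightDescent_iff.mp ht
  exact (((ih _ (by omega) _ rfl).image _).insert _).subset hsub

theorem inversionSet_injective : Function.Injective cs.inversionSet := by
  intro v v' h
  induction hn : ℓ v using Nat.strong_induction_on generalizing v v' with
  | _ n ih =>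
  obtain rfl | hv := eq_or_ne v 1
  · by_contra hv'
    obtain ⟨t, ht⟩ := cs.exists_rightDescent_of_ne_one (Ne.symm hv')
    have := cs.simpleRoot_mem_inversionSet_iff.mpr ht
    rw [← h, inversionSet_one] at this
    exact this
  obtain ⟨t, ht⟩ := cs.exists_rightDescent_of_ne_one hv
  have ht' : cs.IsRightDescent v' t := by
    rw [← simpleRoot_mem_inversionSet_iff, ← h, simpleRoot_mem_inversionSet_iff]
    exact ht
  have hlen := cs.isRightDescent_iff.mp ht
  exact mul_right_cancel (ih _ (by omega)
    (by rw [inversionSet_mul_simple _ ht, inversionSet_mul_simple _ ht', h] :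
      cs.inversionSet (v * s t) = cs.inversionSet (v' * s t)) rfl)

end Roots

section Dominant

variable {f : Module.Dual ℝ (B →₀ ℝ)}

lemma apply_simpleReflection_of_apply_simpleRoot_eq_zero {t : B} (ht : f (α t) = 0)
    (x : B →₀ ℝ) : f (σ t x) = f x := by
  rw [M.simpleReflection_apply, map_sub, map_smul, ht, smul_zero, sub_zero]

theorem apply_geometricRep_of_mem_closure {T : Set B} (hT : ∀ i ∈ T, f (α i) = 0) {v : W}
    (hv : v ∈ Subgroup.closure (cs.simple '' T)) (x : B →₀ ℝ) : f (ρ v x) = f x := by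
  induction hv using Subgroup.closure_induction generalizing x with
  | mem _ hw =>
    obtain ⟨i, hi, rfl⟩ := hw
    rw [geometricRep_simple, apply_simpleReflection_of_apply_simpleRoot_eq_zero (hT i hi)]
  | one => rw [map_one]; rfl
  | mul a b _ _ ha hb => rw [map_mul, LinearEquiv.mul_apply, ha, hb]
  | inv a _ ha => rw [← ha, ← LinearEquiv.mul_apply, ← map_mul, mul_inv_cancel, map_one]; rfl

theorem mem_closure_of_apply_geometricRep_eq (hf : ∀ i, 0 ≤ f (α i)) {v : W}
    (hv : ∀ x, f (ρ v x) = f x) : v ∈ Subgroup.closure (cs.simple '' {i | f (α i) = 0}) := by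
  induction hn : ℓ v using Nat.strong_induction_on generalizing v with
  | _ n ih =>
  obtain rfl | hv1 := eq_or_ne v 1
  · exact Subgroup.one_mem _
  obtain ⟨t, ht⟩ := cs.exists_rightDescent_of_ne_one hv1
  have hft : f (α t) = 0 := by
    refine le_antisymm ?_ (hf t)
    rw [← hv, ← map_zero f]
    exact Finsupp.monotone_of_apply_single_one_nonneg hf (cs.geometricRep_simpleRoot_neg ht).le
  have hlen := cs.isRightDescent_iff.mp ht
  have hvt := ih _ (by omega) (v := v * s t) (fun x => by
    rw [geometricRep_mul_simple_apply, hv, apply_simpleReflection_of_apply_simpleRoot_eq_zero hft])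
    rfl
  simpa using Subgroup.mul_mem _ hvt (Subgroup.subset_closure ⟨t, hft, rfl⟩)

/-- The inversion sets of the elements of the parabolic subgroup all lie among the positive roots
killed by `f`, and they determine the elements. -/
theorem finite_closure_of_finite_pos_roots_ker (hf : ∀ i, 0 ≤ f (α i))
    (hfin : {β | β ∈ cs.roots ∧ 0 < β ∧ f β = 0}.Finite) :
    Finite (Subgroup.closure (cs.simple '' {i | f (α i) = 0})) := by
  have hmono := Finsupp.monotone_of_apply_single_one_nonneg hf
  have hsub : ∀ v ∈ Subgroup.closure (cs.simple '' {i | f (α i) = 0}),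
      cs.inversionSet v ⊆ {β | β ∈ cs.roots ∧ 0 < β ∧ f β = 0} := by
    rintro v hv β ⟨hβ, hpos, hneg⟩
    refine ⟨hβ, hpos, le_antisymm ?_ ?_⟩
    · rw [← cs.apply_geometricRep_of_mem_closure (fun _ hi => hi) hv, ← map_zero f]
      exact hmono hneg.le
    · rw [← map_zero f]
      exact hmono hpos.le
  refine Set.Finite.to_subtype (Set.Finite.of_finite_image ?_ cs.inversionSet_injective.injOn)
  exact hfin.finite_subsets.subset (Set.image_subset_iff.mpr hsub)

/-- Take `u` minimising the number of positive roots on which `f ∘ ρ u` is negative: if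
`f (ρ u (α t)) < 0`, then `σ t`, which permutes the positive roots other than `α t`, shows that
`u * s t` has fewer. -/
theorem exists_dominant_translate
    (hf : ∀ u, {β | β ∈ cs.roots ∧ 0 < β ∧ f (ρ u β) < 0}.Finite) :
    ∃ u : W, ∀ i, 0 ≤ f (ρ u (α i)) := by
  set S := fun u => {β | β ∈ cs.roots ∧ 0 < β ∧ f (ρ u β) < 0}
  refine ⟨Function.argmin fun u => (S u).ncard, fun t => not_lt.mp fun ht => ?_⟩
  set u := Function.argmin fun u => (S u).ncard
  have hsub : S (u * s t) ⊆ σ t '' (S u \ {α t}) := by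
    rintro β ⟨hβ, hpos, hneg⟩
    have hne : β ≠ α t := by
      rintro rfl
      rw [geometricRep_mul_simple_apply, M.simpleReflection_simpleRoot, map_neg, map_neg] at hneg
      linarith
    refine ⟨σ t β, ⟨⟨cs.simpleReflection_mem_roots t hβ, cs.simpleReflection_pos_of_pos hβ hpos hne,
      by rwa [← geometricRep_mul_simple_apply]⟩, M.simpleReflection_ne_simpleRoot_of_pos hpos⟩,
      M.simpleReflection_simpleReflection t β⟩
  have hlt : (S (u * s t)).ncard < (S u).ncard :=
    calc (S (u * s t)).ncard
        ≤ (σ t '' (S u \ {α t})).ncard := Set.ncard_le_ncard hsub (((hf u).sdiff).image _)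
      _ ≤ (S u \ {α t}).ncard := Set.ncard_image_le (hf u).sdiff
      _ < (S u).ncard := Set.ncard_sdiff_singleton_lt_of_mem
          ⟨cs.simpleRoot_mem_roots t, Finsupp.single_one_pos t, ht⟩ (hf u)
  exact hlt.not_ge (Function.argmin_le (fun u => (S u).ncard) (u * s t))

end Dominant

section Averaging

variable (H : Subgroup W) [Fintype H]

def averagedCoordSum : Module.Dual ℝ (B →₀ ℝ) :=
  ∑ h : H, Finsupp.coordSum ∘ₗ (ρ h).toLinearMap

lemma averagedCoordSum_apply (x : B →₀ ℝ) :
    cs.averagedCoordSum H x = ∑ h : H, Finsupp.coordSum (ρ h x) := by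
  simp [averagedCoordSum]

variable {H}

lemma averagedCoordSum_geometricRep {g : W} (hg : g ∈ H) (x : B →₀ ℝ) :
    cs.averagedCoordSum H (ρ g x) = cs.averagedCoordSum H x := by
  simp only [averagedCoordSum_apply]
  exact Fintype.sum_equiv (Equiv.mulRight ⟨g, hg⟩) _ _ fun h => by
    simp [map_mul, LinearEquiv.mul_apply]

variable (H)

theorem finite_setOf_averagedCoordSum_nonpos (u : W) :
    {β | β ∈ cs.roots ∧ 0 < β ∧ cs.averagedCoordSum H (ρ u β) ≤ 0}.Finite := by
  refine (Set.finite_iUnion fun h : H => cs.inversionSet_finite (h * u)).subset ?_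
  rintro β ⟨hβ, hpos, hz⟩
  rw [averagedCoordSum_apply] at hz
  obtain ⟨h, -, hh⟩ : ∃ h : H, h ∈ Finset.univ ∧ Finsupp.coordSum (ρ h (ρ u β)) ≤ 0 :=
    Finset.exists_le_of_sum_le Finset.univ_nonempty (by simpa using hz)
  have hroot := cs.geometricRep_mem_roots (h * u) hβ
  rw [map_mul, LinearEquiv.mul_apply] at hroot
  refine Set.mem_iUnion.mpr ⟨h, hβ, hpos, ?_⟩
  rw [map_mul, LinearEquiv.mul_apply]
  exact (cs.pos_or_neg_of_mem_roots hroot).resolve_left fun hpos' =>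
    (Finsupp.coordSum_pos hpos').not_ge hh

end Averaging

end CoxeterSystem

end

/-- Tits's theorem: every finite subgroup of a Coxeter group `W` is contained in a
conjugate of a parabolic subgroup `W_T` of finite order. -/
theorem finite_subgroup_le_conjugate_finite_parabolic {B : Type} {W : Type} [Group W]
    (M : CoxeterMatrix B) (cs : CoxeterSystem M W) (H : Subgroup W) (hH : Finite H) :
    ∃ (T : Set B) (w : W), Finite (Subgroup.closure (cs.simple '' T)) ∧
      H ≤ (Subgroup.closure (cs.simple '' T)).map (MulAut.conj w).toMonoidHom := by
  have := Fintype.ofFinite H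
  have hfin := cs.finite_setOf_averagedCoordSum_nonpos H
  obtain ⟨u, hu⟩ := cs.exists_dominant_translate fun u =>
    (hfin u).subset fun β ⟨hβ, hpos, hneg⟩ => ⟨hβ, hpos, hneg.le⟩
  set f := cs.averagedCoordSum H ∘ₗ (cs.geometricRep u).toLinearMap
  refine ⟨{i | f (α i) = 0}, u, cs.finite_closure_of_finite_pos_roots_ker hu
      ((hfin u).subset fun β ⟨hβ, hpos, h0⟩ => ⟨hβ, hpos, h0.le⟩), fun h hh => ?_⟩
  refine ⟨u⁻¹ * h * u, cs.mem_closure_of_apply_geometricRep_eq hu fun x => ?_, by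
    simp [MulAut.conj_apply, mul_assoc]⟩
  have hz := cs.averagedCoordSum_geometricRep hh (cs.geometricRep u x)
  simp only [f, LinearMap.comp_apply, LinearEquiv.coe_coe, ← LinearEquiv.mul_apply,
    ← map_mul] at hz ⊢
  rwa [mul_assoc u⁻¹, mul_inv_cancel_left]
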